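/- Cummins' expansion lemma: for any Laplace pairing a : H⊗H → H one has, for all A, B, C, D ∈ H, a(AB ⊗ CD) = a(A₍₁₎⊗C₍₁₎) · a(A₍₂₎⊗D₍₁₎) · a(B₍₁₎⊗C₍₂₎) · a(B₍₂₎⊗D₍₂₎); equivalently, as linear maps H^{⊗4} → H, a∘(m⊗m) equals the fourfold product m⁽⁴⁾∘(a⊗a⊗a⊗a) pre-composed with (Δ⊗Δ⊗Δ⊗Δ) followed by the permutation of tensor factors that pairs A₍₁₎ with C₍₁₎, A₍₂₎ with D₍₁₎, B₍₁₎ with C₍₂₎, and B₍₂₎ with D₍₂₎. -/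
import Mathlib


open TensorProduct

noncomputable section

variable (R H : Type*) [CommRing R] [CommRing H] [Bialgebra R H]

/-- `a` is a Laplace pairing: `a(x ⊗ yz) = a(x₍₁₎⊗y)·a(x₍₂₎⊗z)` and
`a(xy ⊗ z) = a(x⊗z₍₁₎)·a(y⊗z₍₂₎)`. -/
def IsLaplace (a : H ⊗[R] H →ₗ[R] H) : Prop :=
  (a ∘ₗ TensorProduct.map LinearMap.id (LinearMap.mul' R H) =
    LinearMap.mul' R H ∘ₗ TensorProduct.map a a ∘ₗ
      (TensorProduct.tensorTensorTensorComm R H H H H).toLinearMap ∘ₗ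
      TensorProduct.map Coalgebra.comul LinearMap.id) ∧
  (a ∘ₗ TensorProduct.map (LinearMap.mul' R H) LinearMap.id =
    LinearMap.mul' R H ∘ₗ TensorProduct.map a a ∘ₗ
      (TensorProduct.tensorTensorTensorComm R H H H H).toLinearMap ∘ₗ
      TensorProduct.map LinearMap.id Coalgebra.comul)

set_option synthInstance.maxHeartbeats 1000000 in
/-- Cummins' expansion lemma: for any Laplace pairing `a`, as linear maps on
`(H ⊗ H) ⊗ (H ⊗ H)`, one has
`a(AB ⊗ CD) = a(A₍₁₎⊗C₍₁₎)·a(A₍₂₎⊗D₍₁₎)·a(B₍₁₎⊗C₍₂₎)·a(B₍₂₎⊗D₍₂₎)`;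
the right-hand side is the fourfold product of `a`'s pre-composed with
`Δ ⊗ Δ ⊗ Δ ⊗ Δ` and the permutation pairing `A₍₁₎` with `C₍₁₎`, `A₍₂₎` with `D₍₁₎`,
`B₍₁₎` with `C₍₂₎` and `B₍₂₎` with `D₍₂₎`. -/
theorem cummins_lemma
    (hcoc : (TensorProduct.comm R H H).toLinearMap ∘ₗ Coalgebra.comul
      = (Coalgebra.comul : H →ₗ[R] H ⊗[R] H))
    (a : H ⊗[R] H →ₗ[R] H) (ha : IsLaplace R H a) :
    a ∘ₗ TensorProduct.map (LinearMap.mul' R H) (LinearMap.mul' R H) =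
      LinearMap.mul' R H ∘ₗ
        TensorProduct.map (LinearMap.mul' R H ∘ₗ TensorProduct.map a a)
          (LinearMap.mul' R H ∘ₗ TensorProduct.map a a) ∘ₗ
        TensorProduct.map (TensorProduct.tensorTensorTensorComm R H H H H).toLinearMap
          (TensorProduct.tensorTensorTensorComm R H H H H).toLinearMap ∘ₗ
        (TensorProduct.tensorTensorTensorComm R (H ⊗[R] H) (H ⊗[R] H)
          (H ⊗[R] H) (H ⊗[R] H)).toLinearMap ∘ₗ
        TensorProduct.map LinearMap.id
          (TensorProduct.tensorTensorTensorComm R H H H H).toLinearMap ∘ₗ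
        TensorProduct.map (TensorProduct.map Coalgebra.comul Coalgebra.comul)
          (TensorProduct.map Coalgebra.comul Coalgebra.comul) := by
  obtain ⟨ha1, ha2⟩ := ha
  apply TensorProduct.ext_fourfold'
  intro A B C D
  have h2 : ∀ (x y z : H), a (x ⊗ₜ[R] (y * z)) =
      (LinearMap.mul' R H) (TensorProduct.map a a
        ((TensorProduct.tensorTensorTensorComm R H H H H)
          (Coalgebra.comul x ⊗ₜ[R] (y ⊗ₜ[R] z)))) := by
    intro x y z
    have := LinearMap.congr_fun ha1 (x ⊗ₜ[R] (y ⊗ₜ[R] z))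
    simpa using this
  have h1 : ∀ (x y z : H), a ((x * y) ⊗ₜ[R] z) =
      (LinearMap.mul' R H) (TensorProduct.map a a
        ((TensorProduct.tensorTensorTensorComm R H H H H)
          ((x ⊗ₜ[R] y) ⊗ₜ[R] Coalgebra.comul z))) := by
    intro x y z
    have := LinearMap.congr_fun ha2 ((x ⊗ₜ[R] y) ⊗ₜ[R] z)
    simpa using this
  simp only [LinearMap.comp_apply, TensorProduct.map_tmul, LinearMap.mul'_apply,
    LinearMap.id_coe, id_eq, LinearEquiv.coe_coe]
  rw [h1, Bialgebra.comul_mul]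
  generalize Coalgebra.comul (R := R) C = u
  generalize Coalgebra.comul (R := R) D = v
  induction u using TensorProduct.induction_on with
  | zero => simp
  | add p q hp hq =>
    simp only [add_mul, TensorProduct.add_tmul, TensorProduct.tmul_add, map_add, mul_add,
      add_mul] at hp hq ⊢
    rw [hp, hq]
  | tmul C1 C2 =>
    induction v using TensorProduct.induction_on with
    | zero => simp
    | add p q hp hq =>
      simp only [mul_add, TensorProduct.add_tmul, TensorProduct.tmul_add, map_add, mul_add,
        add_mul] at hp hq ⊢
      rw [hp, hq]
    | tmul D1 D2 =>
      rw [Algebra.TensorProduct.tmul_mul_tmul]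
      simp only [TensorProduct.tensorTensorTensorComm_tmul, TensorProduct.map_tmul,
        LinearMap.mul'_apply, LinearMap.id_coe, id_eq]
      rw [h2, h2]
      simp [LinearMap.comp_apply]
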